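/- Let I ⊆ ℝ be an interval and let T₀, T₁, T₂, T₃ : I → M_N(ℂ) be differentiable matrix-valued functions satisfying the Nahm equation dT_i/ds + [T₀, T_i] = (1/2) Σ_{j,k} ε_{ijk} [T_j, T_k] for i = 1, 2, 3. Then for every ζ ∈ ℂ, the functions T(ζ) = (1/2)(T₁ + i T₂) + ζ T₃ − (1/2)(T₁ − i T₂) ζ² and T₊(ζ) = T₀ − i T₃ + i (T₁ − i T₂) ζ satisfy the Lax equation d(T(ζ))/ds + [T₊(ζ), T(ζ)] = 0 on I. -/

import Mathlib

attribute [local instance] Matrix.normedAddCommGroup Matrix.normedSpace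

/-- The Levi-Civita symbol `ε_{ijk}` on indices in `Fin 3` (with `ε₀₁₂ = 1`). -/
def eps (i j k : Fin 3) : ℤ :=
  (((j : ℕ) : ℤ) - ((i : ℕ) : ℤ)) * (((k : ℕ) : ℤ) - ((i : ℕ) : ℤ))
    * (((k : ℕ) : ℤ) - ((j : ℕ) : ℤ)) / 2

/-- `T(ζ) = (1/2)(T₁ + i T₂) + ζ T₃ − (1/2)(T₁ − i T₂) ζ²`
(spatial Nahm matrices indexed by `Fin 3`, so `T 0 = T₁` etc.). -/
noncomputable def Tz {N : ℕ} (T : Fin 3 → ℝ → Matrix (Fin N) (Fin N) ℂ) (ζ : ℂ) (s : ℝ) :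
    Matrix (Fin N) (Fin N) ℂ :=
  (1 / 2 : ℂ) • (T 0 s + Complex.I • T 1 s) + ζ • T 2 s
    - ((1 / 2 : ℂ) * ζ ^ 2) • (T 0 s - Complex.I • T 1 s)

/-- `T₊(ζ) = T₀ − i T₃ + i (T₁ − i T₂) ζ`. -/
noncomputable def Tplus {N : ℕ} (T₀ : ℝ → Matrix (Fin N) (Fin N) ℂ)
    (T : Fin 3 → ℝ → Matrix (Fin N) (Fin N) ℂ) (ζ : ℂ) (s : ℝ) :
    Matrix (Fin N) (Fin N) ℂ :=
  T₀ s - Complex.I • T 2 s + (Complex.I * ζ) • (T 0 s - Complex.I • T 1 s)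

/-! The Nahm equations express each `T_i'` through commutators. Since `T(ζ)` is linear in the
`T_i`, substituting them turns the Lax equation into a polynomial identity in `ζ` whose
coefficients cancel by `i² = -1`. -/

theorem half_smul_sum_eps_smul_commutator {A : Type*} [Ring A] [Module ℂ A] (X : Fin 3 → A)
    (i : Fin 3) :
    (1 / 2 : ℂ) • ∑ j : Fin 3, ∑ k : Fin 3, (eps i j k : ℂ) • (X j * X k - X k * X j) =
      X (i + 1) * X (i + 2) - X (i + 2) * X (i + 1) := by
  fin_cases i <;> simp only [Fin.sum_univ_three, eps] <;> norm_num <;> rw [← add_smul] <;>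
    norm_num <;> rfl

section

variable {N : ℕ}

theorem hasDerivWithinAt_Tz {I : Set ℝ} {T T' : Fin 3 → ℝ → Matrix (Fin N) (Fin N) ℂ} {s : ℝ}
    (hT : ∀ i, HasDerivWithinAt (T i) (T' i s) I s) (ζ : ℂ) :
    HasDerivWithinAt (Tz T ζ) (Tz T' ζ s) I s :=
  ((((hT 0).add ((hT 1).const_smul Complex.I)).const_smul (1 / 2 : ℂ)).add
    ((hT 2).const_smul ζ)).sub
      (((hT 0).sub ((hT 1).const_smul Complex.I)).const_smul ((1 / 2 : ℂ) * ζ ^ 2))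

theorem Tz_add_commutator_Tplus_eq_zero {T₀ : ℝ → Matrix (Fin N) (Fin N) ℂ}
    {T T' : Fin 3 → ℝ → Matrix (Fin N) (Fin N) ℂ} {s : ℝ}
    (h : ∀ i, T' i s + (T₀ s * T i s - T i s * T₀ s) =
      T (i + 1) s * T (i + 2) s - T (i + 2) s * T (i + 1) s) (ζ : ℂ) :
    Tz T' ζ s + (Tplus T₀ T ζ s * Tz T ζ s - Tz T ζ s * Tplus T₀ T ζ s) = 0 := by
  have e₀ : T' 0 s = T 1 s * T 2 s - T 2 s * T 1 s - (T₀ s * T 0 s - T 0 s * T₀ s) :=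
    eq_sub_of_add_eq (h 0)
  have e₁ : T' 1 s = T 2 s * T 0 s - T 0 s * T 2 s - (T₀ s * T 1 s - T 1 s * T₀ s) :=
    eq_sub_of_add_eq (h 1)
  have e₂ : T' 2 s = T 0 s * T 1 s - T 1 s * T 0 s - (T₀ s * T 2 s - T 2 s * T₀ s) :=
    eq_sub_of_add_eq (h 2)
  simp only [Tz, Tplus, e₀, e₁, e₂, smul_add, smul_sub, sub_mul, mul_sub, add_mul, mul_add,
    smul_mul_assoc, mul_smul_comm, smul_smul]
  match_scalars <;> ring_nf <;> simp only [Complex.I_sq] <;> ring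

end

theorem nahm_implies_lax_general {N : ℕ} (I : Set ℝ)
    (T₀ : ℝ → Matrix (Fin N) (Fin N) ℂ)
    (T T' : Fin 3 → ℝ → Matrix (Fin N) (Fin N) ℂ)
    (hT : ∀ (i : Fin 3), ∀ s ∈ I, HasDerivWithinAt (T i) (T' i s) I s)
    (hnahm : ∀ (i : Fin 3), ∀ s ∈ I,
      T' i s + (T₀ s * T i s - T i s * T₀ s) =
        (1 / 2 : ℂ) • ∑ j : Fin 3, ∑ k : Fin 3,
          (eps i j k : ℂ) • (T j s * T k s - T k s * T j s)) :
    ∀ (ζ : ℂ), ∀ s ∈ I,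
      HasDerivWithinAt (fun u => Tz T ζ u)
        (-(Tplus T₀ T ζ s * Tz T ζ s - Tz T ζ s * Tplus T₀ T ζ s)) I s := by
  intro ζ s hs
  have hlax := Tz_add_commutator_Tplus_eq_zero (fun i =>
    (hnahm i s hs).trans (half_smul_sum_eps_smul_commutator (fun j => T j s) i)) ζ
  exact (hasDerivWithinAt_Tz (fun i => hT i s hs) ζ).congr_deriv (eq_neg_of_add_eq_zero_left hlax)

/-- If `T₀, T₁, T₂, T₃ : I → M_N(ℂ)` satisfy the Nahm equation
`dT_i/ds + [T₀, T_i] = (1/2) Σ_{j,k} ε_{ijk} [T_j, T_k]` on an interval `I`, then for every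
`ζ ∈ ℂ` the Lax equation `d(T(ζ))/ds + [T₊(ζ), T(ζ)] = 0` holds on `I`. -/
theorem nahm_implies_lax {N : ℕ} (I : Set ℝ) (hI : Convex ℝ I)
    (T₀ : ℝ → Matrix (Fin N) (Fin N) ℂ)
    (T T' : Fin 3 → ℝ → Matrix (Fin N) (Fin N) ℂ)
    (hT₀ : ∀ s ∈ I, DifferentiableWithinAt ℝ T₀ I s)
    (hT : ∀ (i : Fin 3), ∀ s ∈ I, HasDerivWithinAt (T i) (T' i s) I s)
    (hnahm : ∀ (i : Fin 3), ∀ s ∈ I,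
      T' i s + (T₀ s * T i s - T i s * T₀ s) =
        (1 / 2 : ℂ) • ∑ j : Fin 3, ∑ k : Fin 3,
          (eps i j k : ℂ) • (T j s * T k s - T k s * T j s)) :
    ∀ (ζ : ℂ), ∀ s ∈ I,
      HasDerivWithinAt (fun u => Tz T ζ u)
        (-(Tplus T₀ T ζ s * Tz T ζ s - Tz T ζ s * Tplus T₀ T ζ s)) I s :=
  nahm_implies_lax_general I T₀ T T' hT hnahm
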